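/- In the special case of an acyclic partial matching Σ = {(σ◁τ)} consisting of a single matched pair on a finite simplicial complex K with C-compatible cosheaf C, the Morse complex on the critical simplices K∖{σ,τ}, with boundary blocks [α:ω]_Σ = [α:ω]·C_{α▷ω} − [τ:ω]·[τ:σ]·[α:σ]·C_{τ▷ω}∘C^{-1}_{τ▷σ}∘C_{α▷σ}, is a chain complex (the composition of consecutive Morse boundary maps vanishes). -/

import Mathlib

open Classical DirectSum

noncomputable section

/-- A finite (abstract) simplicial complex on a linearly ordered vertex type `V`:
a downward-closed finite collection of nonempty finite vertex sets. -/
structure SimpComplex (V : Type) [LinearOrder V] where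
  simplices : Finset (Finset V)
  nonempty_mem : ∀ s ∈ simplices, s.Nonempty
  down_closed : ∀ s ∈ simplices, ∀ t : Finset V, t.Nonempty → t ⊆ s → t ∈ simplices

variable {V : Type} [Fintype V] [LinearOrder V]

/-- The incidence symbol `[σ:τ]`: `(-1)^i` if `τ` is the `i`-th face of `σ`
(i.e. obtained by deleting the `i`-th vertex of `σ` in the linear order), and `0` otherwise. -/
def incidence (F : Type) [Field F] (σ τ : Finset V) : F :=
  if τ ⊆ σ ∧ σ.card = τ.card + 1 then
    ∑ v ∈ σ \ τ, (-1 : F) ^ (σ.filter (fun w => w < v)).card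
  else 0

/-- A cosheaf of finite-dimensional `F`-vector spaces on the poset of finite
subsets of `V` (in particular on any simplicial complex with vertices in `V`):
costalks together with extension maps, functorially. -/
structure Cosheaf (F : Type) [Field F] (V : Type) [LinearOrder V] where
  stalk : Finset V → Type
  [instAdd : ∀ σ, AddCommGroup (stalk σ)]
  [instMod : ∀ σ, Module F (stalk σ)]
  [instFD : ∀ σ, FiniteDimensional F (stalk σ)]
  ext : ∀ σ τ : Finset V, τ ⊆ σ → (stalk σ →ₗ[F] stalk τ)
  ext_id : ∀ σ, ext σ σ (subset_refl σ) = LinearMap.id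
  ext_comp : ∀ σ τ υ (h1 : τ ⊆ σ) (h2 : υ ⊆ τ),
    (ext τ υ h2).comp (ext σ τ h1) = ext σ υ (h2.trans h1)

attribute [instance] Cosheaf.instAdd Cosheaf.instMod Cosheaf.instFD

variable {F : Type} [Field F]

/-- The extension map `C_{σ ≥ τ}`, extended by zero to all pairs. -/
def Cosheaf.extMap (C : Cosheaf F V) (σ τ : Finset V) : C.stalk σ →ₗ[F] C.stalk τ :=
  if h : τ ⊆ σ then C.ext σ τ h else 0

/-- The `k`-simplices of `K` (as a type). -/
abbrev SimpComplex.Kk (K : SimpComplex V) (k : ℕ) : Type :=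
  {σ : Finset V // σ ∈ K.simplices ∧ σ.card = k + 1}

noncomputable instance (K : SimpComplex V) (k : ℕ) : Fintype (K.Kk k) :=
  Fintype.ofFinite _

instance (K : SimpComplex V) (k : ℕ) : DecidableEq (K.Kk k) :=
  Subtype.instDecidableEq

/-- The chain group `C_k(K;𝒞) = ⊕_{σ ∈ K_k} 𝒞_σ`. -/
abbrev Chain (C : Cosheaf F V) (K : SimpComplex V) (k : ℕ) : Type :=
  ⨁ σ : K.Kk k, C.stalk σ.1

/-- The boundary map `∂ : C_{k+1}(K;𝒞) → C_k(K;𝒞)`, given on the summand of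
`σ` by `∑_τ [σ:τ] · C_{σ ≥ τ}`. -/
def boundary (C : Cosheaf F V) (K : SimpComplex V) (k : ℕ) :
    Chain C K (k + 1) →ₗ[F] Chain C K k :=
  DirectSum.toModule F _ _ fun σ =>
    ∑ τ : K.Kk k, incidence F σ.1 τ.1 •
      ((DirectSum.lof F (K.Kk k) (fun τ' => C.stalk τ'.1) τ).comp (C.extMap σ.1 τ.1))

/-- Cycles in degree `n`. -/
def cyclesC (C : Cosheaf F V) (K : SimpComplex V) : (n : ℕ) → Submodule F (Chain C K n)
  | 0 => ⊤
  | (n + 1) => LinearMap.ker (boundary C K n)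

/-- Cosheaf homology `H_n(K;𝒞)`. -/
abbrev homologyC (C : Cosheaf F V) (K : SimpComplex V) (n : ℕ) : Type :=
  (cyclesC C K n) ⧸ (LinearMap.range (boundary C K n)).comap (cyclesC C K n).subtype

end

noncomputable section

variable {V : Type} [Fintype V] [LinearOrder V] {F : Type} [Field F]

/-- `L` is a subcomplex of `K`. -/
def SimpComplex.Sub (L K : SimpComplex V) : Prop := L.simplices ⊆ K.simplices

/-- The chain map `C_•(L;𝒞|_L) → C_•(K;𝒞)` induced by a subcomplex inclusion
`L ⊆ K`: in each degree, the inclusion of the direct summand `⊕_{σ ∈ L_k} 𝒞_σ`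
into `⊕_{σ ∈ K_k} 𝒞_σ`. -/
def inclChain (C : Cosheaf F V) {L K : SimpComplex V} (h : L.Sub K) (k : ℕ) :
    Chain C L k →ₗ[F] Chain C K k :=
  DirectSum.toModule F _ _ fun σ =>
    DirectSum.lof F (K.Kk k) (fun τ => C.stalk τ.1) ⟨σ.1, ⟨h σ.2.1, σ.2.2⟩⟩


/-- A partial matching on a finite simplicial complex `K`: a set of facet pairs
`(σ ◁ τ)` of simplices of `K` whose constituents are pairwise distinct. -/
structure Matching (K : SimpComplex V) where
  pairs : Finset (Finset V × Finset V)
  mem_fst : ∀ p ∈ pairs, p.1 ∈ K.simplices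
  mem_snd : ∀ p ∈ pairs, p.2 ∈ K.simplices
  facet : ∀ p ∈ pairs, p.1 ⊆ p.2 ∧ p.2.card = p.1.card + 1
  pairwise_distinct : ∀ p ∈ pairs, ∀ q ∈ pairs, p ≠ q →
    p.1 ≠ q.1 ∧ p.1 ≠ q.2 ∧ p.2 ≠ q.1 ∧ p.2 ≠ q.2

/-- A simplex is `Σ`-critical if it appears in no matched pair. -/
def Matching.Critical {K : SimpComplex V} (S : Matching K) (σ : Finset V) : Prop :=
  ∀ p ∈ S.pairs, σ ≠ p.1 ∧ σ ≠ p.2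

/-- `IsSigmaPath S l` : the nonempty list `l = [(σ₁,τ₁),…,(σₘ,τₘ)]` of matched
pairs is a `Σ`-path, i.e. a zig-zag `σ₁ ◁ τ₁ ▷ σ₂ ◁ τ₂ ▷ ⋯ ◁ τₘ` in which each
`σ_{i+1}` is a facet of `τ_i` distinct from `σ_i`. -/
def IsSigmaPath {K : SimpComplex V} (S : Matching K)
    (l : List (Finset V × Finset V)) : Prop :=
  l ≠ [] ∧ (∀ p ∈ l, p ∈ S.pairs) ∧
    l.Chain' (fun p q => q.1 ⊆ p.2 ∧ p.2.card = q.1.card + 1 ∧ q.1 ≠ p.1)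

/-- A partial matching is acyclic if every `Σ`-path of length `> 1` is gradient:
its initial simplex `σ₁` is not a face of its final simplex `τₘ`. -/
def Matching.Acyclic {K : SimpComplex V} (S : Matching K) : Prop :=
  ∀ l, IsSigmaPath S l → ∀ h : l ≠ [], 1 < l.length →
    ¬ (l.head h).1 ⊆ (l.getLast h).2

/-- A matching is compatible with the cosheaf `𝒞` if each matched extension map
`C_{τ ▷ σ}` is an isomorphism. -/
def Matching.Compatible {K : SimpComplex V} (S : Matching K) (C : Cosheaf F V) : Prop :=
  ∀ p ∈ S.pairs, Function.Bijective (C.extMap p.2 p.1)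

/-- The formal inverse `C⁻¹_{τ ▷ σ} : 𝒞_σ → 𝒞_τ` of an invertible extension map
(zero if the extension map is not invertible). -/
def Cosheaf.invExt (C : Cosheaf F V) (τ σ : Finset V) : C.stalk σ →ₗ[F] C.stalk τ :=
  if h : Function.Bijective (C.extMap τ σ) then
    ((LinearEquiv.ofBijective (C.extMap τ σ) h).symm : C.stalk σ →ₗ[F] C.stalk τ)
  else 0

/-- The (unsigned) `𝒞`-weight of a `Σ`-path `[(σ₁,τ₁),…,(σₘ,τₘ)]`:
`C⁻¹_{τₘ▷σₘ} ∘ C_{τₘ₋₁▷σₘ} ∘ ⋯ ∘ C_{τ₁▷σ₂} ∘ C⁻¹_{τ₁▷σ₁} : 𝒞_{σ₁} → 𝒞_{τₘ}`. -/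
def pathWeight (C : Cosheaf F V) :
    (l : List (Finset V × Finset V)) → (h : l ≠ []) →
      (C.stalk (l.head h).1 →ₗ[F] C.stalk (l.getLast h).2)
  | [p], _ => C.invExt p.2 p.1
  | p :: q :: l, _ =>
    (pathWeight C (q :: l) (by simp)).comp ((C.extMap p.2 q.1).comp (C.invExt p.2 p.1))

/-- The sign `(-1)^m · ∏[τᵢ:σᵢ] · ∏[τᵢ:σᵢ₊₁]` of a `Σ`-path. -/
def pathSign (F : Type) [Field F] {V : Type} [Fintype V] [LinearOrder V] :
    List (Finset V × Finset V) → F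
  | [] => 1
  | [p] => - incidence F p.2 p.1
  | p :: q :: l => (- incidence F p.2 p.1) * incidence F p.2 q.1 * pathSign F (q :: l)

noncomputable instance : Fintype {l : List (Finset V × Finset V) // l.Nodup} := by
  infer_instance

/-- The Morse boundary block `[α:ω]_Σ : 𝒞_α → 𝒞_ω`, namely
`[α:ω]·C_{α▷ω} + ∑_ρ [τ:ω]·C_{τ▷ω} ∘ ω_ρ ∘ C_{α▷σ}·[α:σ]`, the sum being over
`Σ`-paths `ρ` from `σ` to `τ` (incidence numbers kill all terms where `σ` is not
a facet of `α` or `ω` is not a facet of `τ`; by acyclicity a `Σ`-path never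
repeats a pair, so the sum may be taken over duplicate-free lists). -/
noncomputable def morseBlock {K : SimpComplex V} (C : Cosheaf F V) (S : Matching K)
    (α ω : Finset V) : C.stalk α →ₗ[F] C.stalk ω :=
  incidence F α ω • C.extMap α ω +
    ∑ ρ : {l : List (Finset V × Finset V) // l.Nodup},
      if h : IsSigmaPath S ρ.1 then
        (pathSign F ρ.1 * incidence F α (ρ.1.head h.1).1 *
            incidence F (ρ.1.getLast h.1).2 ω) •
          ((C.extMap (ρ.1.getLast h.1).2 ω).comp
            ((pathWeight C ρ.1 h.1).comp (C.extMap α (ρ.1.head h.1).1)))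
      else 0

/-- The `Σ`-critical `k`-simplices of `K`. -/
abbrev critIdx {K : SimpComplex V} (S : Matching K) (k : ℕ) : Type :=
  {σ : Finset V // (σ ∈ K.simplices ∧ σ.card = k + 1) ∧ S.Critical σ}

noncomputable instance {K : SimpComplex V} (S : Matching K) (k : ℕ) :
    Fintype (critIdx S k) := Fintype.ofFinite _

/-- The Morse chain group `C^Σ_k(K;𝒞) = ⊕_{α critical} 𝒞_α`. -/
abbrev MorseChain {K : SimpComplex V} (C : Cosheaf F V) (S : Matching K) (k : ℕ) :
    Type :=
  ⨁ σ : critIdx S k, C.stalk σ.1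

/-- The Morse boundary map, given blockwise by `[α:ω]_Σ`. -/
noncomputable def morseBoundary {K : SimpComplex V} (C : Cosheaf F V) (S : Matching K)
    (k : ℕ) : MorseChain C S (k + 1) →ₗ[F] MorseChain C S k :=
  DirectSum.toModule F _ _ fun α =>
    ∑ ω : critIdx S k,
      (DirectSum.lof F (critIdx S k) (fun ω' => C.stalk ω'.1) ω).comp
        (morseBlock C S α.1 ω.1)

/-- Morse cycles in degree `n`. -/
noncomputable def morseCycles {K : SimpComplex V} (C : Cosheaf F V) (S : Matching K) :
    (n : ℕ) → Submodule F (MorseChain C S n)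
  | 0 => ⊤
  | (n + 1) => LinearMap.ker (morseBoundary C S n)

/-- Morse homology in degree `n`. -/
noncomputable abbrev morseHomology {K : SimpComplex V} (C : Cosheaf F V)
    (S : Matching K) (n : ℕ) : Type :=
  (morseCycles C S n) ⧸
    (LinearMap.range (morseBoundary C S n)).comap (morseCycles C S n).subtype


/-- The Morse boundary block for the single matched pair `σ ◁ τ`:
`[α:ω]_Σ = [α:ω]·C_{α▷ω} − [τ:ω]·[τ:σ]·[α:σ]·C_{τ▷ω} ∘ C⁻¹_{τ▷σ} ∘ C_{α▷σ}`. -/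
noncomputable def singleMorseBlock (C : Cosheaf F V) (σ τ α ω : Finset V) :
    C.stalk α →ₗ[F] C.stalk ω :=
  incidence F α ω • C.extMap α ω -
    (incidence F τ ω * incidence F τ σ * incidence F α σ) •
      ((C.extMap τ ω).comp ((C.invExt τ σ).comp (C.extMap α σ)))

/-- The `k`-simplices of `K` other than `σ` and `τ` (the critical simplices of the
single-pair matching `{(σ,τ)}`). -/
abbrev sCritIdx (K : SimpComplex V) (σ τ : Finset V) (k : ℕ) : Type :=
  {ξ : Finset V // (ξ ∈ K.simplices ∧ ξ.card = k + 1) ∧ ξ ≠ σ ∧ ξ ≠ τ}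

noncomputable instance (K : SimpComplex V) (σ τ : Finset V) (k : ℕ) :
    Fintype (sCritIdx K σ τ k) := Fintype.ofFinite _

/-- The Morse boundary for the single matched pair `σ ◁ τ`, on
`⊕_{ξ ∈ K_k, ξ ∉ {σ,τ}} 𝒞_ξ`. -/
noncomputable def singleMorseBoundary (C : Cosheaf F V) (K : SimpComplex V)
    (σ τ : Finset V) (k : ℕ) :
    (⨁ ξ : sCritIdx K σ τ (k + 1), C.stalk ξ.1) →ₗ[F]
      (⨁ ξ : sCritIdx K σ τ k, C.stalk ξ.1) :=
  DirectSum.toModule F _ _ fun α =>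
    ∑ ω : sCritIdx K σ τ k,
      (DirectSum.lof F (sCritIdx K σ τ k) (fun ω' => C.stalk ω'.1) ω).comp
        (singleMorseBlock C σ τ α.1 ω.1)

/-!
Write `∂_{ab} = [a:b] C_{a▷b}` for the blocks of the boundary of `K`. The Morse block is the
Schur complement `[α:ω]_Σ = ∂_{αω} - ∂_{τω} ∂_{τσ}⁻¹ ∂_{ασ}` of the invertible block
`∂_{τσ}`, whose inverse is `[τ:σ] C⁻¹_{τ▷σ}` because `[τ:σ]² = 1`. Expanding
`∑_β [β:ω]_Σ [α:β]_Σ`, the term containing `∂_{βσ} ∂_{τβ}` vanishes for degree reasons, and each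
of the other three sums runs over all `β` except `σ` and `τ`; by `∂² = 0` it equals minus the
two missing terms, and these cancel against each other once `∂_{τσ} ∂_{τσ}⁻¹ = 1` is used.
-/

namespace DirectSum

variable {R : Type*} [Semiring R] {ι κ μ : Type*} [DecidableEq ι] [DecidableEq κ]
  [DecidableEq μ] [Fintype κ] [Fintype μ] {M : ι → Type*} {N : κ → Type*} {P : μ → Type*}
  [∀ i, AddCommMonoid (M i)] [∀ i, Module R (M i)] [∀ j, AddCommMonoid (N j)]
  [∀ j, Module R (N j)] [∀ l, AddCommMonoid (P l)] [∀ l, Module R (P l)]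

def blockMap (A : ∀ i j, M i →ₗ[R] N j) : (⨁ i, M i) →ₗ[R] ⨁ j, N j :=
  toModule R ι _ fun i => ∑ j, lof R κ N j ∘ₗ A i j

theorem blockMap_comp_blockMap (A : ∀ i j, M i →ₗ[R] N j) (B : ∀ j l, N j →ₗ[R] P l) :
    blockMap B ∘ₗ blockMap A = blockMap fun i l => ∑ j, B j l ∘ₗ A i j := by
  refine linearMap_ext R fun i => LinearMap.ext fun x => ?_
  simp only [blockMap, LinearMap.comp_apply, toModule_lof, LinearMap.sum_apply, map_sum]
  rw [Finset.sum_comm]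

theorem blockMap_zero : blockMap (0 : ∀ i j, M i →ₗ[R] N j) = 0 :=
  linearMap_ext R fun i => LinearMap.ext fun x => by simp [blockMap]

end DirectSum

namespace LinearMap

variable {R : Type*} [Semiring R] {ι M N P : Type*} [AddCommMonoid M] [AddCommMonoid N]
  [AddCommMonoid P] [Module R M] [Module R N] [Module R P]

theorem finsetSum_comp (s : Finset ι) (f : ι → N →ₗ[R] P) (g : M →ₗ[R] N) :
    (∑ i ∈ s, f i) ∘ₗ g = ∑ i ∈ s, f i ∘ₗ g :=
  LinearMap.ext fun x => by simp only [comp_apply, sum_apply]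

theorem comp_finsetSum (s : Finset ι) (f : N →ₗ[R] P) (g : ι → M →ₗ[R] N) :
    f ∘ₗ (∑ i ∈ s, g i) = ∑ i ∈ s, f ∘ₗ g i :=
  LinearMap.ext fun x => by simp only [comp_apply, sum_apply, map_sum]

end LinearMap

section Incidence

omit [Fintype V]

theorem incidence_erase {a : Finset V} {v : V} (hv : v ∈ a) :
    incidence F a (a.erase v) = (-1) ^ (a.filter (· < v)).card := by
  rw [incidence, if_pos ⟨a.erase_subset v, (Finset.card_erase_add_one hv).symm⟩,
    Finset.sdiff_erase_self hv, Finset.sum_singleton]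

theorem exists_eq_erase_of_facet {a b : Finset V} (hba : b ⊆ a)
    (hcard : a.card = b.card + 1) : ∃ v ∈ a, b = a.erase v := by
  obtain ⟨v, hvb, rfl⟩ := Finset.exists_eq_insert_iff.mpr ⟨hba, hcard.symm⟩
  exact ⟨v, Finset.mem_insert_self v b, (Finset.erase_insert hvb).symm⟩

theorem exists_eq_erase_of_incidence_ne_zero {a b : Finset V} (h : incidence F a b ≠ 0) :
    ∃ v ∈ a, b = a.erase v := by
  by_contra hb
  exact h (if_neg fun hface => hb (exists_eq_erase_of_facet hface.1 hface.2))

theorem subset_of_incidence_ne_zero {a b : Finset V} (h : incidence F a b ≠ 0) : b ⊆ a := by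
  obtain ⟨v, -, rfl⟩ := exists_eq_erase_of_incidence_ne_zero h
  exact a.erase_subset v

theorem card_eq_of_incidence_ne_zero {a b : Finset V} (h : incidence F a b ≠ 0) :
    a.card = b.card + 1 := by
  obtain ⟨v, hv, rfl⟩ := exists_eq_erase_of_incidence_ne_zero h
  exact (Finset.card_erase_add_one hv).symm

theorem incidence_self (a : Finset V) : incidence F a a = 0 := by
  by_contra h
  have := card_eq_of_incidence_ne_zero h
  omega

theorem incidence_mul_self {a b : Finset V} (hba : b ⊆ a) (hcard : a.card = b.card + 1) :
    incidence F a b * incidence F a b = 1 := by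
  obtain ⟨v, hv, rfl⟩ := exists_eq_erase_of_facet hba hcard
  rw [incidence_erase hv, ← pow_add]
  exact Even.neg_one_pow ⟨_, rfl⟩

/-- The two ways of deleting `u < v` from `a` carry opposite signs: deleting `v` first does
not move `u`, while deleting `u` first moves `v` down by one. -/
theorem incidence_erase_erase_add {a : Finset V} {u v : V} (hu : u ∈ a) (hv : v ∈ a)
    (huv : u < v) :
    incidence F a (a.erase v) * incidence F (a.erase v) ((a.erase v).erase u) +
      incidence F a (a.erase u) * incidence F (a.erase u) ((a.erase v).erase u) = 0 := by
  have hu' : u ∈ a.erase v := Finset.mem_erase.mpr ⟨huv.ne, hu⟩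
  have hv' : v ∈ a.erase u := Finset.mem_erase.mpr ⟨huv.ne', hv⟩
  have hu_filter : u ∈ a.filter (· < v) := Finset.mem_filter.mpr ⟨hu, huv⟩
  have hpos_u : ((a.erase v).filter (· < u)).card = (a.filter (· < u)).card := by
    rw [Finset.filter_erase, Finset.erase_eq_of_notMem (by simp [huv.le.not_gt])]
  have hpos_v : ((a.erase u).filter (· < v)).card + 1 = (a.filter (· < v)).card := by
    rw [Finset.filter_erase, Finset.card_erase_add_one hu_filter]
  rw [incidence_erase hv, incidence_erase hu', incidence_erase hu, Finset.erase_right_comm,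
    incidence_erase hv', hpos_u, ← hpos_v]
  ring

end Incidence

theorem sum_incidence_mul (a : Finset V) (f : Finset V → F) :
    ∑ b, incidence F a b * f b = ∑ v ∈ a, incidence F a (a.erase v) * f (a.erase v) := by
  rw [← Finset.sum_image (f := fun b => incidence F a b * f b) a.erase_injOn]
  refine (Finset.sum_subset (Finset.subset_univ _) fun b _ hb => ?_).symm
  by_contra h
  obtain ⟨v, hv, rfl⟩ := exists_eq_erase_of_incidence_ne_zero (left_ne_zero_of_mul h)
  exact hb (Finset.mem_image_of_mem _ hv)

theorem sum_incidence_mul_incidence (a c : Finset V) :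
    ∑ b, incidence F a b * incidence F b c = 0 := by
  rw [sum_incidence_mul]
  by_cases h : ∃ u ∈ a, ∃ v ∈ a, u < v ∧ c = (a.erase v).erase u
  · obtain ⟨u, hu, v, hv, huv, rfl⟩ := h
    have hvanish : ∀ w ∈ a, w ∉ ({v, u} : Finset V) →
        incidence F a (a.erase w) * incidence F (a.erase w) ((a.erase v).erase u) = 0 := by
      intro w hw hwvu
      refine mul_eq_zero_of_right _ (by_contra fun hne => ?_)
      obtain ⟨x, -, hx⟩ := exists_eq_erase_of_incidence_ne_zero hne
      have hwc : w ∈ (a.erase v).erase u := by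
        simp only [Finset.mem_insert, Finset.mem_singleton, not_or] at hwvu
        simp [hw, hwvu.1, hwvu.2]
      rw [hx] at hwc
      exact (Finset.mem_erase.mp (Finset.mem_of_mem_erase hwc)).1 rfl
    rw [← Finset.sum_subset (by simp [Finset.insert_subset_iff, hu, hv]) hvanish,
      Finset.sum_pair huv.ne']
    exact incidence_erase_erase_add (F := F) hu hv huv
  · refine Finset.sum_eq_zero fun w hw => mul_eq_zero_of_right _ (by_contra fun hne => ?_)
    obtain ⟨x, hx, rfl⟩ := exists_eq_erase_of_incidence_ne_zero (F := F) hne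
    obtain ⟨hxw, hxa⟩ := Finset.mem_erase.mp hx
    rcases hxw.lt_or_gt with hlt | hlt
    · exact h ⟨x, hxa, w, hw, hlt, rfl⟩
    · exact h ⟨w, hw, x, hxa, hlt, Finset.erase_right_comm⟩

theorem sum_sCritIdx_add_add {M : Type*} [AddCommMonoid M] {K : SimpComplex V}
    {σ τ : Finset V} (hστ : σ ≠ τ) {j : ℕ} (g : Finset V → M)
    (hg : ∀ b, g b ≠ 0 → b ∈ K.simplices ∧ b.card = j + 1) :
    ∑ β : sCritIdx K σ τ j, g β.1 + g σ + g τ = ∑ b, g b := by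
  have hsplit : ∀ b, g b = (if (b ∈ K.simplices ∧ b.card = j + 1) ∧ b ≠ σ ∧ b ≠ τ
      then g b else 0) + (if b = σ then g b else 0) + (if b = τ then g b else 0) := by
    intro b
    by_cases hb : g b = 0
    · simp [hb]
    · have := hg b hb
      by_cases hbσ : b = σ <;> by_cases hbτ : b = τ <;> simp_all
  rw [Finset.sum_congr rfl fun b _ => hsplit b, Finset.sum_add_distrib, Finset.sum_add_distrib,
    Fintype.sum_ite_eq', Fintype.sum_ite_eq', ← Finset.sum_filter,
    ← Finset.sum_subtype _ Finset.mem_filter_univ]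

namespace Cosheaf

variable (C : Cosheaf F V)

def boundaryBlock (a b : Finset V) : C.stalk a →ₗ[F] C.stalk b :=
  incidence F a b • C.extMap a b

def boundaryBlockInv (τ σ : Finset V) : C.stalk σ →ₗ[F] C.stalk τ :=
  incidence F τ σ • C.invExt τ σ

section

omit [Fintype V]

theorem extMap_comp_extMap {a b c : Finset V} (hba : b ⊆ a) (hcb : c ⊆ b) :
    C.extMap b c ∘ₗ C.extMap a b = C.extMap a c := by
  rw [extMap, extMap, extMap, dif_pos hba, dif_pos hcb, dif_pos (hcb.trans hba), C.ext_comp]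

theorem boundaryBlock_comp_boundaryBlock (a b c : Finset V) :
    C.boundaryBlock b c ∘ₗ C.boundaryBlock a b =
      (incidence F a b * incidence F b c) • C.extMap a c := by
  rw [boundaryBlock, boundaryBlock, LinearMap.smul_comp, LinearMap.comp_smul, smul_smul,
    mul_comm]
  by_cases h : incidence F a b * incidence F b c = 0
  · rw [h, zero_smul, zero_smul]
  · rw [C.extMap_comp_extMap (subset_of_incidence_ne_zero (left_ne_zero_of_mul h))
      (subset_of_incidence_ne_zero (right_ne_zero_of_mul h))]

theorem boundaryBlock_comp_boundaryBlock_of_card_ne {a c : Finset V}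
    (h : a.card ≠ c.card + 2) (b : Finset V) :
    C.boundaryBlock b c ∘ₗ C.boundaryBlock a b = 0 := by
  rw [boundaryBlock_comp_boundaryBlock]
  by_cases hab : incidence F a b = 0
  · rw [hab, zero_mul, zero_smul]
  by_cases hbc : incidence F b c = 0
  · rw [hbc, mul_zero, zero_smul]
  have := card_eq_of_incidence_ne_zero hab
  have := card_eq_of_incidence_ne_zero hbc
  omega

theorem boundaryBlock_self (a : Finset V) : C.boundaryBlock a a = 0 := by
  rw [boundaryBlock, incidence_self, zero_smul]

variable {C} {τ σ : Finset V}

theorem boundaryBlock_comp_boundaryBlockInv (hστ : σ ⊆ τ) (hcard : τ.card = σ.card + 1)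
    (hbij : Function.Bijective (C.extMap τ σ)) :
    C.boundaryBlock τ σ ∘ₗ C.boundaryBlockInv τ σ = LinearMap.id := by
  rw [boundaryBlock, boundaryBlockInv, LinearMap.smul_comp, LinearMap.comp_smul, smul_smul,
    incidence_mul_self hστ hcard, one_smul, invExt, dif_pos hbij]
  exact LinearMap.ext (LinearEquiv.ofBijective _ hbij).apply_symm_apply

theorem boundaryBlockInv_comp_boundaryBlock (hστ : σ ⊆ τ) (hcard : τ.card = σ.card + 1)
    (hbij : Function.Bijective (C.extMap τ σ)) :
    C.boundaryBlockInv τ σ ∘ₗ C.boundaryBlock τ σ = LinearMap.id := by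
  rw [boundaryBlock, boundaryBlockInv, LinearMap.smul_comp, LinearMap.comp_smul, smul_smul,
    incidence_mul_self hστ hcard, one_smul, invExt, dif_pos hbij]
  exact LinearMap.ext (LinearEquiv.ofBijective _ hbij).symm_apply_apply

end

theorem sum_boundaryBlock_comp_boundaryBlock (a c : Finset V) :
    ∑ b, C.boundaryBlock b c ∘ₗ C.boundaryBlock a b = 0 := by
  simp only [boundaryBlock_comp_boundaryBlock, ← Finset.sum_smul, sum_incidence_mul_incidence,
    zero_smul]

theorem sum_sCritIdx_boundaryBlock_comp {K : SimpComplex V} {σ τ : Finset V} (hστ : σ ≠ τ)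
    {k : ℕ} {a c : Finset V} (ha : a ∈ K.simplices)
    -- either condition puts every `β` with `[a:β][β:c] ≠ 0` in degree `k + 1`
    (hdeg : a.card = k + 3 ∨ c.card = k + 1) :
    ∑ β : sCritIdx K σ τ (k + 1), C.boundaryBlock β.1 c ∘ₗ C.boundaryBlock a β.1 =
      -(C.boundaryBlock σ c ∘ₗ C.boundaryBlock a σ) -
        C.boundaryBlock τ c ∘ₗ C.boundaryBlock a τ := by
  have hsupp : ∀ b, C.boundaryBlock b c ∘ₗ C.boundaryBlock a b ≠ 0 →
      b ∈ K.simplices ∧ b.card = k + 1 + 1 := by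
    intro b hb
    rw [boundaryBlock_comp_boundaryBlock] at hb
    have hab := left_ne_zero_of_mul (left_ne_zero_of_smul hb)
    have hbc := right_ne_zero_of_mul (left_ne_zero_of_smul hb)
    have hcard_ab := card_eq_of_incidence_ne_zero hab
    have hcard_bc := card_eq_of_incidence_ne_zero hbc
    refine ⟨K.down_closed a ha b (Finset.card_pos.mp (by omega))
      (subset_of_incidence_ne_zero hab), by omega⟩
  have hsum := sum_sCritIdx_add_add hστ _ hsupp
  rw [C.sum_boundaryBlock_comp_boundaryBlock] at hsum
  linear_combination (norm := module) hsum

end Cosheaf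

omit [Fintype V] in
theorem singleMorseBlock_eq (C : Cosheaf F V) (σ τ α ω : Finset V) :
    singleMorseBlock C σ τ α ω = C.boundaryBlock α ω -
      C.boundaryBlock τ ω ∘ₗ C.boundaryBlockInv τ σ ∘ₗ C.boundaryBlock α σ := by
  simp only [singleMorseBlock, Cosheaf.boundaryBlock, Cosheaf.boundaryBlockInv,
    LinearMap.smul_comp, LinearMap.comp_smul, smul_smul]
  congr 2
  ring

theorem sum_singleMorseBlock_comp_singleMorseBlock (C : Cosheaf F V) {K : SimpComplex V}
    {σ τ : Finset V} (hτ : τ ∈ K.simplices) (hστ : σ ⊆ τ) (hcard : τ.card = σ.card + 1)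
    (hbij : Function.Bijective (C.extMap τ σ)) {k : ℕ} {α ω : Finset V}
    (hα : α ∈ K.simplices) (hαcard : α.card = k + 3) (hωcard : ω.card = k + 1) :
    ∑ β : sCritIdx K σ τ (k + 1),
      singleMorseBlock C σ τ β.1 ω ∘ₗ singleMorseBlock C σ τ α β.1 = 0 := by
  have hne : σ ≠ τ := by rintro rfl; omega
  set X := C.boundaryBlockInv τ σ with hX
  have hexpand : ∀ β : sCritIdx K σ τ (k + 1),
      singleMorseBlock C σ τ β.1 ω ∘ₗ singleMorseBlock C σ τ α β.1 =
        C.boundaryBlock β.1 ω ∘ₗ C.boundaryBlock α β.1 -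
        (C.boundaryBlock τ ω ∘ₗ X) ∘ₗ C.boundaryBlock β.1 σ ∘ₗ C.boundaryBlock α β.1 -
        (C.boundaryBlock β.1 ω ∘ₗ C.boundaryBlock τ β.1) ∘ₗ X ∘ₗ C.boundaryBlock α σ := by
    intro β
    have hcross : C.boundaryBlock β.1 σ ∘ₗ C.boundaryBlock τ β.1 = 0 :=
      C.boundaryBlock_comp_boundaryBlock_of_card_ne (by omega) β.1
    simp only [singleMorseBlock_eq, ← hX, LinearMap.sub_comp, LinearMap.comp_sub,
      LinearMap.comp_assoc]
    rw [← LinearMap.comp_assoc _ (C.boundaryBlock τ β.1) (C.boundaryBlock β.1 σ), hcross]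
    simp only [LinearMap.zero_comp, LinearMap.comp_zero, sub_zero]
  have hασ : C.boundaryBlock τ σ ∘ₗ X ∘ₗ C.boundaryBlock α σ = C.boundaryBlock α σ := by
    rw [← LinearMap.comp_assoc, Cosheaf.boundaryBlock_comp_boundaryBlockInv hστ hcard hbij,
      LinearMap.id_comp]
  have hατ : X ∘ₗ C.boundaryBlock τ σ ∘ₗ C.boundaryBlock α τ = C.boundaryBlock α τ := by
    rw [← LinearMap.comp_assoc, Cosheaf.boundaryBlockInv_comp_boundaryBlock hστ hcard hbij,
      LinearMap.id_comp]
  rw [Finset.sum_congr rfl fun β _ => hexpand β, Finset.sum_sub_distrib,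
    Finset.sum_sub_distrib, ← LinearMap.finsetSum_comp, ← LinearMap.comp_finsetSum,
    C.sum_sCritIdx_boundaryBlock_comp hne hα (Or.inl hαcard),
    C.sum_sCritIdx_boundaryBlock_comp hne hτ (Or.inr hωcard),
    C.sum_sCritIdx_boundaryBlock_comp hne hα (Or.inl hαcard),
    C.boundaryBlock_self, C.boundaryBlock_self]
  simp only [LinearMap.comp_zero, LinearMap.zero_comp, LinearMap.neg_comp, LinearMap.comp_neg,
    LinearMap.sub_comp, LinearMap.comp_sub, LinearMap.comp_assoc, hασ, hατ]
  abel

theorem singleMorseBoundary_eq_blockMap (C : Cosheaf F V) (K : SimpComplex V) (σ τ : Finset V)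
    (k : ℕ) : singleMorseBoundary C K σ τ k =
      DirectSum.blockMap fun α ω => singleMorseBlock C σ τ α.1 ω.1 := rfl

theorem singleMorseBoundary_sq_zero_general (C : Cosheaf F V) (K : SimpComplex V)
    (σ τ : Finset V) (hτ : τ ∈ K.simplices)
    (hfacet : σ ⊆ τ ∧ τ.card = σ.card + 1)
    (hbij : Function.Bijective (C.extMap τ σ)) (k : ℕ) :
    (singleMorseBoundary C K σ τ k).comp (singleMorseBoundary C K σ τ (k + 1)) = 0 := by
  rw [singleMorseBoundary_eq_blockMap, singleMorseBoundary_eq_blockMap,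
    DirectSum.blockMap_comp_blockMap, ← DirectSum.blockMap_zero]
  congr 1
  ext α ω : 2
  exact sum_singleMorseBlock_comp_singleMorseBlock C hτ hfacet.1 hfacet.2 hbij α.2.1.1
    α.2.1.2 ω.2.1.2

/-- For an acyclic partial matching consisting of a single matched
pair `σ ◁ τ` on a finite simplicial complex `K`, with `𝒞`-compatible cosheaf `𝒞`
(i.e. `C_{τ▷σ}` is an isomorphism), the Morse complex on the critical simplices
`K ∖ {σ,τ}` with the boundary blocks
`[α:ω]_Σ = [α:ω]·C_{α▷ω} − [τ:ω]·[τ:σ]·[α:σ]·C_{τ▷ω}∘C⁻¹_{τ▷σ}∘C_{α▷σ}`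
is a chain complex: consecutive Morse boundary maps compose to zero. -/
theorem singleMorseBoundary_sq_zero (C : Cosheaf F V) (K : SimpComplex V)
    (σ τ : Finset V) (hσ : σ ∈ K.simplices) (hτ : τ ∈ K.simplices)
    (hfacet : σ ⊆ τ ∧ τ.card = σ.card + 1)
    (hbij : Function.Bijective (C.extMap τ σ)) (k : ℕ) :
    (singleMorseBoundary C K σ τ k).comp (singleMorseBoundary C K σ τ (k + 1)) = 0 :=
  singleMorseBoundary_sq_zero_general C K σ τ hτ hfacet hbij k

end
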